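/- arXiv:math/0502460 — 3 statements merged into one kernel-verified Lean document; each statement's English description precedes it below -/
import Mathlib

section
/- For h a nonzero integer and q ∈ ℂ with 0<|q|<1, the q-Bernoulli numbers satisfy the recurrence q^h · Σ_{k=0}^{n} C(n,k) B_{k,q}^{(h)} − B_{n,q}^{(h)} = δ_{1,n} for all n ≥ 1, where δ is the Kronecker delta (this is the umbral relation q^h(B_q^{(h)}+1)^n − B_{n,q}^{(h)} = δ_{1,n}). -/
/-!
On a neighbourhood of `0` the denominator `q ^ h * exp t - 1` does not vanish (as `q ^ h ≠ 1`),
so the generating function `F` satisfies `q ^ h * exp t * F t - F t = h log q + t` there. The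
hypothesis makes `F` analytic at `0` with `B n = F⁽ⁿ⁾(0)`, and differentiating the identity `n`
times at `0` with the Leibniz rule yields the recurrence, because every derivative of `exp` at `0`
is `1`.
-/

open Filter Topology FormalMultilinearSeries

theorem hasFPowerSeriesAt_ofScalars_of_hasSum {𝕜 : Type*} [RCLike 𝕜] {c : ℕ → 𝕜} {f : 𝕜 → 𝕜}
    {r : ℝ} (hr : 0 < r) (hf : ∀ t : 𝕜, ‖t‖ < r → HasSum (fun n => c n * t ^ n) (f t)) :
    HasFPowerSeriesAt f (ofScalars 𝕜 c) 0 := by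
  set ρ : NNReal := ⟨r / 2, by positivity⟩
  have hρr : (ρ : ℝ) < r := show r / 2 < r by linarith
  have hρ : ‖((ρ : ℝ) : 𝕜)‖ < r := by simpa using hρr
  refine ⟨ρ, (ofScalars 𝕜 c).le_radius_of_tendsto (l := 0) ?_,
    ENNReal.coe_pos.mpr (NNReal.coe_pos.mp (half_pos hr)), ?_⟩
  · simpa [ofScalars_norm] using (hf _ hρ).summable.tendsto_atTop_zero.norm
  · intro y hy
    rw [Metric.mem_eball, edist_zero_right, enorm_eq_nnnorm, ENNReal.coe_lt_coe] at hy
    simpa [ofScalars_apply_eq, mul_comm] using hf y ((NNReal.coe_lt_coe.mpr hy).trans hρr)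

theorem HasFPowerSeriesAt.iteratedDeriv_eq_of_ofScalars_div_factorial {𝕜 : Type*}
    [NontriviallyNormedField 𝕜] [CompleteSpace 𝕜] [CharZero 𝕜] {f : 𝕜 → 𝕜} {b : ℕ → 𝕜} {x : 𝕜}
    (hf : HasFPowerSeriesAt f (ofScalars 𝕜 fun n => b n / n.factorial) x) (n : ℕ) :
    iteratedDeriv n f x = b n := by
  have h := congrFun (ofScalars_series_injective 𝕜 𝕜
    (hf.analyticAt.hasFPowerSeriesAt.eq_formalMultilinearSeries hf)) n
  exact (div_left_inj' (Nat.cast_ne_zero.mpr n.factorial_ne_zero)).mp h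

theorem zpow_ne_one_of_norm_lt_one {𝕜 : Type*} [NormedDivisionRing 𝕜] {q : 𝕜} (hq : ‖q‖ < 1)
    {h : ℤ} (hh : h ≠ 0) : q ^ h ≠ 1 := by
  intro hq1
  have := congrArg norm hq1
  rw [norm_zpow, norm_one, zpow_eq_one_iff_right₀ (norm_nonneg q) hq.ne] at this
  exact hh this

theorem mul_sum_choose_iteratedDeriv_sub_of_eventuallyEq {a c : ℂ} {F : ℂ → ℂ} {n : ℕ}
    (hF : ContDiffAt ℂ n F 0)
    (hEq : (fun t => a * Complex.exp t * F t - F t) =ᶠ[𝓝 0] fun t => c + t) :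
    a * ∑ k ∈ Finset.range (n + 1), (n.choose k : ℂ) * iteratedDeriv k F 0 - iteratedDeriv n F 0
      = if n = 0 then c else if n = 1 then 1 else 0 := by
  have hexp : ContDiffAt ℂ n Complex.exp 0 := Complex.contDiff_exp.contDiffAt
  have hleibniz : iteratedDeriv n (fun t => F t * Complex.exp t) 0
      = ∑ k ∈ Finset.range (n + 1), (n.choose k : ℂ) * iteratedDeriv k F 0 := by
    simp [iteratedDeriv_fun_mul hF hexp, iteratedDeriv_eq_iterate, Complex.iter_deriv_exp]
  have hrhs : iteratedDeriv n (fun t => c + t) 0 = if n = 0 then c else if n = 1 then 1 else 0 := by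
    rcases n.eq_zero_or_pos with rfl | hn
    · simp
    · simp [iteratedDeriv_const_add hn, iteratedDeriv_fun_id_zero, hn.ne']
  rw [← hrhs, ← hEq.iteratedDeriv_eq n, iteratedDeriv_fun_sub (by fun_prop) hF, ← hleibniz]
  simp_rw [mul_assoc, mul_comm (Complex.exp _)]
  rw [iteratedDeriv_const_mul_field]

theorem qBernoulli_recurrence_general
    (h : ℤ) (hh : h ≠ 0) (q : ℂ) (hq1 : ‖q‖ < 1)
    (B : ℕ → ℂ) (r : ℝ) (hr : 0 < r)
    (hB : ∀ t : ℂ, ‖t‖ < r →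
      HasSum (fun n : ℕ => B n * t ^ n / (n.factorial : ℂ))
        (((h : ℂ) * Complex.log q + t) / (q ^ h * Complex.exp t - 1))) :
    ∀ n : ℕ, 1 ≤ n →
      q ^ h * (∑ k ∈ Finset.range (n + 1), (n.choose k : ℂ) * B k) - B n
        = if n = 1 then 1 else 0 := by
  intro n hn
  set F : ℂ → ℂ := fun t => ((h : ℂ) * Complex.log q + t) / (q ^ h * Complex.exp t - 1)
  have hF : HasFPowerSeriesAt F (ofScalars ℂ fun n => B n / n.factorial) 0 :=
    hasFPowerSeriesAt_ofScalars_of_hasSum hr fun t ht => by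
      simpa only [mul_div_right_comm] using hB t ht
  have hden : ∀ᶠ t in 𝓝 0, q ^ h * Complex.exp t - 1 ≠ 0 :=
    (by fun_prop : Continuous fun t => q ^ h * Complex.exp t - 1).continuousAt.eventually_ne
      (by simpa [sub_eq_zero] using zpow_ne_one_of_norm_lt_one hq1 hh)
  have hEq : (fun t => q ^ h * Complex.exp t * F t - F t) =ᶠ[𝓝 0]
      fun t => (h : ℂ) * Complex.log q + t :=
    hden.mono fun t ht => by simp only [F]; field_simp
  simp_rw [← hF.iteratedDeriv_eq_of_ofScalars_div_factorial]
  rw [mul_sum_choose_iteratedDeriv_sub_of_eventuallyEq hF.analyticAt.contDiffAt hEq,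
    if_neg (by omega)]

/-- the umbral recurrence `q^h (B_q+1)^n − B_n = δ_{1,n}` for `n ≥ 1`,
for the `q`-Bernoulli numbers defined by `(h log q + t)/(q^h e^t − 1) = Σ B n tⁿ/n!`. -/
theorem qBernoulli_recurrence
    (h : ℤ) (hh : h ≠ 0) (q : ℂ) (hq0 : 0 < ‖q‖) (hq1 : ‖q‖ < 1)
    (B : ℕ → ℂ) (r : ℝ) (hr : 0 < r)
    (hB : ∀ t : ℂ, ‖t‖ < r →
      HasSum (fun n : ℕ => B n * t ^ n / (n.factorial : ℂ))
        (((h : ℂ) * Complex.log q + t) / (q ^ h * Complex.exp t - 1))) :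
    ∀ n : ℕ, 1 ≤ n →
      q ^ h * (∑ k ∈ Finset.range (n + 1), (n.choose k : ℂ) * B k) - B n
        = if n = 1 then 1 else 0 :=
  qBernoulli_recurrence_general h hh q hq1 B r hr hB
end

section
/- For every integer n ≥ 1 and integers 0 < a < f, the partial q-zeta function satisfies H_q^{(h)}(1−n, a | f) = −(f^{n−1}/n) q^{ha} B_{n,q^f}^{(h)}(a/f), where H_q^{(h)}(s,a|f) = Σ_{m≡a (f), m>0} q^{mh}/m^s − (h log q/(s−1)) Σ_{m≡a (f), m>0} q^{hm}/m^{s−1} (the series converging absolutely at s = 1−n since |q|<1). -/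
/-!
Put `u = (q^f)^h` and `y = a/f`. Writing `m = a + k f = f (y + k)`, both series are `q^{ha} f^j`
times the Lerch sums `T_j = Σ_k u^k (y+k)^j` (`j = n-1, n`), and their convergence forces `u < 1`.
Expanding every `e^{(y+k)t}` and exchanging the absolutely convergent double sum gives
`Σ_j T_j t^j/j! = e^{yt}/(1 - u e^t)`, so the coefficients of the generating function
`(log u + t) e^{yt}/(u e^t - 1)` of `B_{j,q^f}^{(h)}(y)` are `-(log u) T_j - j T_{j-1}`.
Reading off the coefficient of `t^n` finishes the proof.
-/

open Filter Nat

/-- The Lerch transcendent `Φ(u, -j, y)`. -/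
noncomputable def lerchSum (u y : ℝ) (j : ℕ) : ℝ := ∑' k : ℕ, u ^ k * (y + k) ^ j

section Lerch

variable {u y : ℝ}

theorem summable_geometric_mul_add_pow (hu0 : 0 < u) (hu1 : u < 1) (hy : 0 ≤ y) (j : ℕ) :
    Summable fun k : ℕ => u ^ k * (y + k) ^ j := by
  have hshift : Summable fun k : ℕ => ((k : ℝ) + 1) ^ j * u ^ k := by
    have := (summable_nat_add_iff (f := fun k : ℕ => (k : ℝ) ^ j * u ^ k) 1).2 <|
      summable_pow_mul_geometric_of_norm_lt_one j (by rwa [Real.norm_of_nonneg hu0.le])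
    refine (this.div_const u).congr fun k => ?_
    rw [pow_succ, ← mul_assoc, mul_div_cancel_right₀ _ hu0.ne']
    push_cast
    rfl
  refine (hshift.mul_left ((y + 1) ^ j)).of_nonneg_of_le (fun k => by positivity) fun k => ?_
  calc u ^ k * (y + k) ^ j ≤ u ^ k * ((y + 1) * (k + 1)) ^ j := by
        gcongr
        nlinarith [k.cast_nonneg (α := ℝ)]
    _ = _ := by rw [mul_pow]; ring

theorem lt_one_of_summable_geometric_mul_add_pow (hy : 0 ≤ y) {j : ℕ}
    (hs : Summable fun k : ℕ => u ^ k * (y + k) ^ j) : u < 1 := by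
  by_contra! hu1
  have hbig : ∀ᶠ k : ℕ in atTop, 1 ≤ u ^ k * (y + k) ^ j := by
    filter_upwards [eventually_ge_atTop 1] with k hk
    have : (1 : ℝ) ≤ y + k := by
      have : (1 : ℝ) ≤ k := by exact_mod_cast hk
      linarith
    exact one_le_mul_of_one_le_of_one_le (one_le_pow₀ hu1) (one_le_pow₀ this)
  exact absurd (ge_of_tendsto hs.tendsto_atTop_zero hbig) (by norm_num)

theorem hasSum_geometric_mul_exp {s : ℝ} (hu0 : 0 ≤ u) (hs : u * Real.exp s < 1) :
    HasSum (fun k : ℕ => u ^ k * Real.exp ((y + k) * s))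
      (Real.exp (y * s) / (1 - u * Real.exp s)) := by
  refine ((hasSum_geometric_of_lt_one (by positivity) hs).mul_left (Real.exp (y * s))).congr_fun
    fun k => ?_
  rw [add_mul, Real.exp_add, mul_pow, ← Real.exp_nat_mul, mul_comm (k : ℝ) s]
  ring

theorem hasSum_lerchSum_mul_pow_div_factorial (hu0 : 0 < u) (hy : 0 ≤ y) {t : ℝ}
    (ht : u * Real.exp |t| < 1) :
    HasSum (fun j : ℕ => lerchSum u y j * t ^ j / j !)
      (Real.exp (y * t) / (1 - u * Real.exp t)) := by
  have hu1 : u < 1 := by nlinarith [Real.add_one_le_exp |t|, abs_nonneg t]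
  have hexp (x : ℝ) : HasSum (fun j : ℕ => x ^ j / j !) (Real.exp x) := by
    rw [Real.exp_eq_exp_ℝ]; exact NormedSpace.expSeries_div_hasSum_exp x
  let g : ℕ × ℕ → ℝ := fun p => u ^ p.1 * ((y + p.1) * t) ^ p.2 / p.2.factorial
  have hrow (s : ℝ) (k : ℕ) :
      HasSum (fun j : ℕ => u ^ k * ((y + k) * s) ^ j / j !) (u ^ k * Real.exp ((y + k) * s)) :=
    ((hexp _).mul_left (u ^ k)).congr_fun fun j => by ring
  have hg : Summable g := by
    refine Summable.of_norm ?_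
    have hnorm : (fun p => ‖g p‖)
        = fun p : ℕ × ℕ => u ^ p.1 * ((y + p.1) * |t|) ^ p.2 / p.2.factorial := by
      funext p
      simp only [g, Real.norm_eq_abs, abs_div, abs_mul, abs_pow, abs_of_nonneg hu0.le,
        abs_of_nonneg (by positivity : 0 ≤ y + p.1), Nat.abs_cast]
    rw [hnorm, summable_prod_of_nonneg fun p => by positivity]
    refine ⟨fun k => (hrow |t| k).summable, ?_⟩
    simp only [fun k => (hrow |t| k).tsum_eq]
    exact (hasSum_geometric_mul_exp hu0.le ht).summable
  have hsum : HasSum g (Real.exp (y * t) / (1 - u * Real.exp t)) := by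
    have hut : u * Real.exp t < 1 :=
      lt_of_le_of_lt (by gcongr; exact le_abs_self t) ht
    rw [← (hg.hasSum.prod_fiberwise (hrow t)).unique (hasSum_geometric_mul_exp hu0.le hut)]
    exact hg.hasSum
  have hcol (j : ℕ) : HasSum (fun k => g (k, j)) (lerchSum u y j * (t ^ j / j !)) :=
    ((summable_geometric_mul_add_pow hu0 hu1 hy j).hasSum.mul_right (t ^ j / j !)).congr_fun
      fun k => by simp only [g, mul_pow]; ring
  simpa only [mul_div_assoc] using
    (((Equiv.prodComm ℕ ℕ).hasSum_iff).2 hsum).prod_fiberwise hcol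

theorem hasSum_qBernoulli_genFun (hu0 : 0 < u) (hy : 0 ≤ y) {t : ℝ}
    (ht : u * Real.exp |t| < 1) :
    HasSum (fun j : ℕ => (-Real.log u * lerchSum u y j - j * lerchSum u y (j - 1)) * t ^ j / j !)
      ((Real.log u + t) / (u * Real.exp t - 1) * Real.exp (y * t)) := by
  set W := Real.exp (y * t) / (1 - u * Real.exp t)
  have hW := hasSum_lerchSum_mul_pow_div_factorial hu0 hy ht
  have hshift : HasSum (fun j : ℕ => j * lerchSum u y (j - 1) * t ^ j / j !) (W * t) := by
    refine (hasSum_nat_add_iff' 1).1 ?_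
    simp only [Finset.range_one, Finset.sum_singleton, CharP.cast_eq_zero, zero_mul, zero_div,
      sub_zero]
    refine (hW.mul_right t).congr_fun fun j => ?_
    rw [Nat.factorial_succ]
    push_cast
    field_simp
    ring
  have hne : u * Real.exp t - 1 ≠ 0 := by
    have : u * Real.exp t < 1 := lt_of_le_of_lt (by gcongr; exact le_abs_self t) ht
    linarith
  have hne' : 1 - u * Real.exp t ≠ 0 := by rw [← neg_sub]; exact neg_ne_zero.2 hne
  have hval : (Real.log u + t) / (u * Real.exp t - 1) * Real.exp (y * t)
      = -Real.log u * W - W * t := by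
    simp only [W]
    field_simp
    ring
  rw [hval]
  exact ((hW.mul_left _).sub hshift).congr_fun fun j => by ring

theorem eq_of_hasSum_mul_pow_div_factorial {F : ℝ → ℝ} {A B : ℕ → ℝ} {ρ : ℝ}
    (hρ : 0 < ρ)
    (hA : ∀ t : ℝ, |t| < ρ → HasSum (fun j : ℕ => A j * t ^ j / j !) (F t))
    (hB : ∀ t : ℝ, |t| < ρ → HasSum (fun j : ℕ => B j * t ^ j / j !) (F t)) : A = B := by
  have hseries (C : ℕ → ℝ)
      (hC : ∀ t : ℝ, |t| < ρ → HasSum (fun j : ℕ => C j * t ^ j / j !) (F t)) :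
      HasFPowerSeriesAt F (FormalMultilinearSeries.ofScalars ℝ fun j => C j / j !) 0 := by
    rw [hasFPowerSeriesAt_iff]
    filter_upwards [Metric.ball_mem_nhds (0 : ℝ) hρ] with t ht
    rw [Metric.mem_ball, Real.dist_eq, sub_zero] at ht
    simpa only [FormalMultilinearSeries.coeff_ofScalars, smul_eq_mul, zero_add, mul_div_right_comm,
      mul_comm (t ^ _)] using hC t ht
  have := (FormalMultilinearSeries.ofScalars_series_eq_iff ℝ _ _).1
    ((hseries A hA).eq_formalMultilinearSeries (hseries B hB))
  funext j
  simpa [Nat.factorial_ne_zero] using congrFun this j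

theorem qBernoulli_eq_lerchSum {P : ℕ → ℝ} {r : ℝ} (hr : 0 < r) (hu0 : 0 < u) (hu1 : u < 1)
    (hy : 0 ≤ y) (hP : ∀ t : ℝ, |t| < r → HasSum (fun k : ℕ => P k * t ^ k / k !)
      ((Real.log u + t) / (u * Real.exp t - 1) * Real.exp (y * t))) (j : ℕ) :
    P j = -Real.log u * lerchSum u y j - j * lerchSum u y (j - 1) := by
  have hρ : 0 < min r (-Real.log u) := lt_min hr (neg_pos.2 (Real.log_neg hu0 hu1))
  have hsmall (t : ℝ) (ht : |t| < -Real.log u) : u * Real.exp |t| < 1 := by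
    have := Real.exp_lt_exp.2 ht
    rw [Real.exp_neg, Real.exp_log hu0] at this
    calc u * Real.exp |t| < u * u⁻¹ := by gcongr
      _ = 1 := mul_inv_cancel₀ hu0.ne'
  exact congrFun (eq_of_hasSum_mul_pow_div_factorial hρ (fun t ht => hP t (lt_min_iff.1 ht).1)
    fun t ht => hasSum_qBernoulli_genFun hu0 hy (hsmall t (lt_min_iff.1 ht).2)) j

end Lerch

theorem qZeta_term_eq {q : ℝ} (hq : q ≠ 0) (h : ℤ) {a f : ℕ} (hf : (f : ℝ) ≠ 0)
    (k j : ℕ) :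
    q ^ (h * (a + k * f)) * ((a + k * f : ℕ) : ℝ) ^ j
      = q ^ (h * a) * f ^ j * (((q ^ f) ^ h) ^ k * ((a : ℝ) / f + k) ^ j) := by
  have hcast : ((a + k * f : ℕ) : ℝ) = f * ((a : ℝ) / f + k) := by
    push_cast
    field_simp
  have hpow : q ^ (h * (k * f)) = ((q ^ f) ^ h) ^ k := by
    rw [← zpow_natCast _ k, ← zpow_natCast q f, ← zpow_mul, ← zpow_mul]
    ring_nf
  rw [hcast, mul_pow, mul_add, zpow_add₀ hq, hpow]
  ring

theorem partial_qZeta_at_nonpositive_integers_general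
    (h : ℤ) (q : ℝ) (hq0 : 0 < q)
    (a f : ℕ) (haf : a < f)
    (n : ℕ) (hn : 1 ≤ n)
    (P : ℕ → ℝ → ℝ) (r : ℝ) (hr : 0 < r)
    (hP : ∀ (y : ℝ) (t : ℝ), |t| < r →
      HasSum (fun k : ℕ => P k y * t ^ k / (k.factorial : ℝ))
        ((((h : ℝ) * Real.log (q ^ (f : ℕ)) + t) /
            ((q ^ (f : ℕ)) ^ h * Real.exp t - 1)) * Real.exp (y * t)))
    (S₁ S₂ : ℝ)
    (hS₁ : HasSum (fun k : ℕ =>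
      q ^ ((h : ℤ) * (a + k * f)) * ((a + k * f : ℕ) : ℝ) ^ (n - 1)) S₁)
    (hS₂ : HasSum (fun k : ℕ =>
      q ^ ((h : ℤ) * (a + k * f)) * ((a + k * f : ℕ) : ℝ) ^ n) S₂) :
    S₁ + ((h : ℝ) * Real.log q / n) * S₂
      = -((f : ℝ) ^ ((n : ℤ) - 1) / n) * q ^ ((h : ℤ) * a) * P n ((a : ℝ) / f) := by
  set u := (q ^ f) ^ h
  set y := (a : ℝ) / f
  have hf : (f : ℝ) ≠ 0 := by
    have : 0 < f := by omega
    positivity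
  have hy : 0 ≤ y := by positivity
  have hu0 : 0 < u := by positivity
  have hterm (j : ℕ) : (fun k : ℕ => q ^ (h * (a + k * f)) * ((a + k * f : ℕ) : ℝ) ^ j)
      = fun k : ℕ => q ^ (h * a) * f ^ j * (u ^ k * (y + k) ^ j) :=
    funext fun k => qZeta_term_eq hq0.ne' h hf k j
  have hu1 : u < 1 := by
    have hc : q ^ (h * a) * (f : ℝ) ^ (n - 1) ≠ 0 := by positivity
    exact lt_one_of_summable_geometric_mul_add_pow (j := n - 1) hy
      ((summable_mul_left_iff hc).1 (hterm (n - 1) ▸ hS₁.summable))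
  have hS (j : ℕ) : HasSum (fun k : ℕ => q ^ (h * (a + k * f)) * ((a + k * f : ℕ) : ℝ) ^ j)
      (q ^ (h * a) * f ^ j * lerchSum u y j) :=
    hterm j ▸ (summable_geometric_mul_add_pow hu0 hu1 hy j).hasSum.mul_left _
  have hPn := qBernoulli_eq_lerchSum hr hu0 hu1 hy
    (fun t ht => by simpa only [u, Real.log_zpow] using hP y t ht) n
  rw [hS₁.unique (hS _), hS₂.unique (hS _), hPn, Real.log_zpow, Real.log_pow]
  obtain ⟨m, rfl⟩ : ∃ m, n = m + 1 := ⟨n - 1, by omega⟩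
  simp only [add_tsub_cancel_right, cast_add, cast_one, zpow_natCast]
  field_simp
  ring

/-- for `n ≥ 1` and `0 < a < f`, the partial `q`-zeta function satisfies
`H_q^{(h)}(1−n,a|f) = −(f^{n−1}/n) q^{ha} B_{n,q^f}^{(h)}(a/f)`. At `s = 1−n` the two
defining series converge (they are `S₁ = Σ_{m≡a(f),m>0} q^{hm} m^{n−1}` and
`S₂ = Σ_{m≡a(f),m>0} q^{hm} m^{n}`, the `m` being enumerated as `m = a + k·f`), so
`H_q^{(h)}(1−n,a|f) = S₁ + (h log q/n)·S₂`. `P k y = B_{k,q^f}^{(h)}(y)` is defined by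
the generating function `(h log(q^f) + t)/((q^f)^h e^t − 1) e^{yt} = Σ P k y t^k/k!`. -/
theorem partial_qZeta_at_nonpositive_integers
    (h : ℤ) (hh : h ≠ 0) (q : ℝ) (hq0 : 0 < q) (hq1 : q < 1)
    (a f : ℕ) (ha : 0 < a) (haf : a < f)
    (n : ℕ) (hn : 1 ≤ n)
    (P : ℕ → ℝ → ℝ) (r : ℝ) (hr : 0 < r)
    (hP : ∀ (y : ℝ) (t : ℝ), |t| < r →
      HasSum (fun k : ℕ => P k y * t ^ k / (k.factorial : ℝ))
        ((((h : ℝ) * Real.log (q ^ (f : ℕ)) + t) /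
            ((q ^ (f : ℕ)) ^ h * Real.exp t - 1)) * Real.exp (y * t)))
    (S₁ S₂ : ℝ)
    (hS₁ : HasSum (fun k : ℕ =>
      q ^ ((h : ℤ) * (a + k * f)) * ((a + k * f : ℕ) : ℝ) ^ (n - 1)) S₁)
    (hS₂ : HasSum (fun k : ℕ =>
      q ^ ((h : ℤ) * (a + k * f)) * ((a + k * f : ℕ) : ℝ) ^ n) S₂) :
    S₁ + ((h : ℝ) * Real.log q / n) * S₂
      = -((f : ℝ) ^ ((n : ℤ) - 1) / n) * q ^ ((h : ℤ) * a) * P n ((a : ℝ) / f) :=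
  partial_qZeta_at_nonpositive_integers_general h q hq0 a f haf n hn P r hr hP S₁ S₂ hS₁ hS₂
end

section
/- The q-extension G_{p,q}^{(h)} of Diamond's p-adic log gamma function, defined for |x|_p > 1 by the Volkenborn integral G_{p,q}^{(h)}(x) = ∫_{ℤ_p} ((x+z) log_p(x+z) − (x+z)) q^{hz} dμ_0(z), admits the series expansion G_{p,q}^{(h)}(x) = (x B_{0,q}^{(h)} + B_{1,q}^{(h)}) log_p x − x B_{0,q}^{(h)} + Σ_{n=1}^∞ ((−1)^{n+1}/(n(n+1))) B_{n+1,q}^{(h)} x^{−n}. -/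
/-
Write `(x+z) log_p(x+z) - (x+z) = ((x+z) log_p x - x) + x φ(z/x)`, where
`φ(y) = (1+y) log_p(1+y) - y = ∑_{n ≥ 0} (-1)^n y^{n+2} / ((n+1)(n+2))` for `|y|_p < 1`.
The affine part integrates to `(x log_p x - x) B₀ + log_p x · B₁`, and integrating the series
term by term gives the `B_{n+2}`-series. The interchange is dominated convergence for the
Riemann sums: `exp` is `1`-Lipschitz on its disc of convergence, so `q^{hz} = exp(z h log_p q)` is
`1`-Lipschitz on `ℤ_p` and the `m`-th term `c_m z^{m+2} q^{hz}` is `|c_m|_p`-Lipschitz and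
vanishes at `0`; all Riemann sums of such a function are bounded by
`p |c_m|_p ≤ p (m+1)(m+2) |x|_p^{-m-1}`, which is summable in `m`.
-/

open Filter Topology Finset IsUltrametricDist
open scoped Nat

noncomputable def padicExpRadius (p : ℕ) : ℝ := (p : ℝ) ^ (-(1 : ℝ) / ((p : ℝ) - 1))

section PadicNorms

variable {p : ℕ} [hp : Fact p.Prime]

lemma padicExpRadius_pos : 0 < padicExpRadius p :=
  Real.rpow_pos_of_pos (Nat.cast_pos.2 hp.out.pos) _

lemma padicExpRadius_le_one : padicExpRadius p ≤ 1 := by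
  have hp1 : (1 : ℝ) < p := Nat.one_lt_cast.2 hp.out.one_lt
  refine Real.rpow_le_one_of_one_le_of_nonpos hp1.le ?_
  rw [neg_div]
  exact neg_nonpos.2 (div_nonneg zero_le_one (by linarith))

lemma Padic.inv_norm_natCast_le {n : ℕ} (hn : n ≠ 0) : ‖(n : ℚ_[p])‖⁻¹ ≤ n := by
  rw [Padic.norm_eq_zpow_neg_valuation (Nat.cast_ne_zero.2 hn), Padic.valuation_natCast,
    zpow_neg, inv_inv, zpow_natCast]
  exact_mod_cast Nat.le_of_dvd (Nat.pos_of_ne_zero hn) pow_padicValNat_dvd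

/-- By Legendre's formula, `(p - 1) v_p((n+1)!) ≤ n`. -/
lemma padicExpRadius_pow_le_norm_factorial (n : ℕ) :
    padicExpRadius p ^ n ≤ ‖((n + 1)! : ℚ_[p])‖ := by
  have hp1 : (1 : ℝ) < p := Nat.one_lt_cast.2 hp.out.one_lt
  have hlegendre : (padicValNat p (n + 1)! : ℝ) * ((p : ℝ) - 1) ≤ n := by
    have := sub_one_mul_padicValNat_factorial_lt_of_ne_zero p n.succ_ne_zero
    have h1 : ((p - 1 : ℕ) : ℝ) = (p : ℝ) - 1 := by
      rw [Nat.cast_sub hp.out.one_le, Nat.cast_one]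
    rw [← h1, mul_comm]
    exact_mod_cast Nat.lt_succ_iff.1 this
  rw [Padic.norm_eq_zpow_neg_valuation (Nat.cast_ne_zero.2 (Nat.factorial_ne_zero _)),
    Padic.valuation_natCast, padicExpRadius, ← Real.rpow_natCast,
    ← Real.rpow_mul (by positivity), ← Real.rpow_intCast]
  refine Real.rpow_le_rpow_of_exponent_le hp1.le ?_
  rw [Int.cast_neg, Int.cast_natCast, neg_div, neg_mul, neg_le_neg_iff, div_mul_eq_mul_div,
    one_mul, le_div_iff₀ (by linarith)]
  exact hlegendre

end PadicNorms

section Ultrametric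

variable {R : Type*} [NormedCommRing R] [IsUltrametricDist R]

lemma norm_pow_succ_sub_pow_succ_le {u v : R} {M : ℝ} (hu : ‖u‖ ≤ M) (hv : ‖v‖ ≤ M)
    (n : ℕ) :
    ‖u ^ (n + 1) - v ^ (n + 1)‖ ≤ ‖u - v‖ * M ^ n := by
  have hM : 0 ≤ M := (norm_nonneg u).trans hu
  induction n with
  | zero => simp
  | succ n ih =>
    have hsplit : u ^ (n + 2) - v ^ (n + 2) =
        u * (u ^ (n + 1) - v ^ (n + 1)) + (u - v) * v ^ (n + 1) := by
      ring
    rw [hsplit]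
    refine (norm_add_le_max _ _).trans (max_le ?_ ?_)
    · calc ‖u * (u ^ (n + 1) - v ^ (n + 1))‖ ≤ M * (‖u - v‖ * M ^ n) :=
            (norm_mul_le _ _).trans (mul_le_mul hu ih (norm_nonneg _) hM)
        _ = ‖u - v‖ * M ^ (n + 1) := by ring
    · calc ‖(u - v) * v ^ (n + 1)‖ ≤ ‖u - v‖ * ‖v‖ ^ (n + 1) :=
            (norm_mul_le _ _).trans
              (mul_le_mul_of_nonneg_left (norm_pow_le' _ n.succ_pos) (norm_nonneg _))
        _ ≤ ‖u - v‖ * M ^ (n + 1) := by gcongr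

lemma norm_mul_sub_mul_le_max {a a' b b' : R} (ha : ‖a‖ ≤ 1) (hb' : ‖b'‖ ≤ 1) :
    ‖a * b - a' * b'‖ ≤ max ‖a - a'‖ ‖b - b'‖ := by
  rw [show a * b - a' * b' = a * (b - b') + (a - a') * b' by ring]
  refine (norm_add_le_max _ _).trans (max_le ?_ ?_)
  · exact ((norm_mul_le _ _).trans (mul_le_of_le_one_left (norm_nonneg _) ha)).trans
      (le_max_right _ _)
  · exact ((norm_mul_le _ _).trans (mul_le_of_le_one_right (norm_nonneg _) hb')).trans
      (le_max_left _ _)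

end Ultrametric

lemma norm_ringHom_mul_lt_padicExpRadius {p : ℕ} [Fact p.Prime] {K : Type*} [NormedField K]
    {ι : ℤ_[p] →+* K} (hι : ∀ z, ‖ι z‖ = ‖z‖) {t : K} (ht : ‖t‖ < padicExpRadius p)
    (z : ℤ_[p]) : ‖ι z * t‖ < padicExpRadius p := by
  rw [norm_mul, hι]
  exact (mul_le_of_le_one_left (norm_nonneg t) (PadicInt.norm_le_one z)).trans_lt ht

section Exponential

variable {p : ℕ} [Fact p.Prime] {K : Type*} [NormedField K] [NormedAlgebra ℚ_[p] K]

lemma norm_factorial_inv_smul_le {a : K} {c M : ℝ} (n : ℕ) (hc : 0 ≤ c) (hM : 0 ≤ M)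
    (ha : ‖a‖ ≤ c * M ^ n) :
    ‖((n + 1)! : ℚ_[p])⁻¹ • a‖ ≤ c * (M / padicExpRadius p) ^ n := by
  have hfact := padicExpRadius_pow_le_norm_factorial (p := p) n
  have hr := pow_pos (padicExpRadius_pos (p := p)) n
  rw [norm_smul, norm_inv, div_pow, mul_div_assoc', inv_mul_eq_div]
  exact div_le_div₀ (by positivity) ha hr hfact

variable [IsUltrametricDist K] [CompleteSpace K]

lemma summable_factorial_inv_smul_pow {u : K} (hu : ‖u‖ < padicExpRadius p) :
    Summable fun n : ℕ => ((n ! : ℚ_[p]))⁻¹ • u ^ n := by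
  have hr := padicExpRadius_pos (p := p)
  rw [← summable_nat_add_iff 1]
  refine Summable.of_norm_bounded ((summable_geometric_of_lt_one (by positivity)
    ((div_lt_one hr).2 hu)).mul_left ‖u‖) fun n => ?_
  exact norm_factorial_inv_smul_le n (norm_nonneg u) (norm_nonneg u)
    (by rw [pow_succ', norm_mul, norm_pow])

lemma norm_exp_sub_exp_le {u v : K} (hu : ‖u‖ < padicExpRadius p)
    (hv : ‖v‖ < padicExpRadius p) :
    ‖NormedSpace.exp u - NormedSpace.exp v‖ ≤ ‖u - v‖ := by
  have hM : max ‖u‖ ‖v‖ / padicExpRadius p ≤ 1 :=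
    (div_le_one padicExpRadius_pos).2 (max_lt hu hv).le
  rw [NormedSpace.exp_eq_tsum ℚ_[p], ← (summable_factorial_inv_smul_pow hu).tsum_sub
    (summable_factorial_inv_smul_pow hv)]
  refine norm_tsum_le_of_forall_le_of_nonneg (norm_nonneg _) fun n => ?_
  cases n with
  | zero => simp
  | succ n =>
    rw [← smul_sub]
    refine (norm_factorial_inv_smul_le n (norm_nonneg _) (le_max_of_le_left (norm_nonneg u))
      (norm_pow_succ_sub_pow_succ_le (le_max_left _ _) (le_max_right _ _) n)).trans ?_
    exact mul_le_of_le_one_right (norm_nonneg _) (pow_le_one₀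
      (div_nonneg (le_max_of_le_left (norm_nonneg u)) padicExpRadius_pos.le) hM)

lemma norm_exp_le_one {u : K} (hu : ‖u‖ < padicExpRadius p) :
    ‖NormedSpace.exp u‖ ≤ 1 := by
  have h0 : ‖(0 : K)‖ < padicExpRadius p := by rw [norm_zero]; exact padicExpRadius_pos
  have h := norm_exp_sub_exp_le hu h0
  rw [NormedSpace.exp_zero, sub_zero] at h
  calc ‖NormedSpace.exp u‖ = ‖(NormedSpace.exp u - 1) + 1‖ := by rw [sub_add_cancel]
    _ ≤ 1 := (norm_add_le_max _ _).trans
      (max_le (h.trans (hu.le.trans padicExpRadius_le_one)) norm_one.le)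

variable {ι : ℤ_[p] →+* K} {t : K}

lemma norm_exp_ringHom_mul_sub_exp_le (hι : ∀ z, ‖ι z‖ = ‖z‖)
    (ht : ‖t‖ < padicExpRadius p) (a b : ℤ_[p]) :
    ‖NormedSpace.exp (ι a * t) - NormedSpace.exp (ι b * t)‖ ≤ ‖a - b‖ := by
  refine (norm_exp_sub_exp_le (norm_ringHom_mul_lt_padicExpRadius hι ht a)
    (norm_ringHom_mul_lt_padicExpRadius hι ht b)).trans ?_
  rw [← sub_mul, ← map_sub, norm_mul, hι]
  exact mul_le_of_le_one_right (norm_nonneg _) (ht.le.trans padicExpRadius_le_one)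

end Exponential

lemma Finset.sum_range_mul_eq_sum_sum {M : Type*} [AddCommMonoid M] (f : ℕ → M) (k m : ℕ) :
    ∑ z ∈ range (k * m), f z = ∑ j ∈ range k, ∑ z ∈ range m, f (j * m + z) := by
  induction k with
  | zero => simp
  | succ k ih => rw [sum_range_succ, ← ih, add_mul, one_mul, sum_range_add]

def volkenbornSum {K : Type*} [Field K] (p : ℕ) (f : ℕ → K) (N : ℕ) : K :=
  ((p : K) ^ N)⁻¹ * ∑ z ∈ range (p ^ N), f z

section VolkenbornSum

variable {K : Type*}

section Field

variable [Field K] (p : ℕ)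

lemma volkenbornSum_const_mul (c : K) (f : ℕ → K) (N : ℕ) :
    volkenbornSum p (fun z => c * f z) N = c * volkenbornSum p f N := by
  simp only [volkenbornSum, ← mul_sum]
  ring

lemma volkenbornSum_add (f g : ℕ → K) (N : ℕ) :
    volkenbornSum p (fun z => f z + g z) N = volkenbornSum p f N + volkenbornSum p g N := by
  simp only [volkenbornSum, sum_add_distrib, mul_add]

lemma volkenbornSum_sub (f g : ℕ → K) (N : ℕ) :
    volkenbornSum p (fun z => f z - g z) N = volkenbornSum p f N - volkenbornSum p g N := by
  simp only [volkenbornSum, sum_sub_distrib, mul_sub]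

variable {p}

lemma volkenbornSum_succ_sub (hp : (p : K) ≠ 0) (f : ℕ → K) (N : ℕ) :
    volkenbornSum p f (N + 1) - volkenbornSum p f N =
      ((p : K) ^ (N + 1))⁻¹ *
        ∑ j ∈ range p, ∑ z ∈ range (p ^ N), (f (j * p ^ N + z) - f z) := by
  simp only [volkenbornSum, sum_sub_distrib, sum_const, card_range, nsmul_eq_mul]
  rw [pow_succ' p N, sum_range_mul_eq_sum_sum]
  field_simp
  ring

end Field

variable [NormedField K] {p : ℕ} [Fact p.Prime] [NormedAlgebra ℚ_[p] K]

lemma norm_natCast_prime : ‖(p : K)‖ = (p : ℝ)⁻¹ := by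
  rw [← map_natCast (algebraMap ℚ_[p] K), norm_algebraMap', Padic.norm_p]

variable [IsUltrametricDist K]

/-- Passing from level `N` to `N + 1` compares `f` at points congruent modulo `p^N`, so a
`C`-Lipschitz `f` changes the Riemann sum by at most `p^{N+1} · C p^{-N}`. -/
lemma norm_volkenbornSum_le {f : ℕ → K} {C : ℝ} (hC : 0 ≤ C) (hf0 : f 0 = 0)
    (hf : ∀ a b : ℕ, ‖f a - f b‖ ≤ C * ‖(a : ℤ_[p]) - b‖) (N : ℕ) :
    ‖volkenbornSum p f N‖ ≤ p * C := by
  have hp0 : (0 : ℝ) < p := Nat.cast_pos.2 (Fact.out : p.Prime).pos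
  have hpK : (p : K) ≠ 0 := norm_ne_zero_iff.1 (by rw [norm_natCast_prime]; positivity)
  induction N with
  | zero => simpa [volkenbornSum, hf0] using by positivity
  | succ N ih =>
    have hterm (j z : ℕ) : ‖f (j * p ^ N + z) - f z‖ ≤ C * ((p : ℝ)⁻¹) ^ N := by
      refine (hf _ _).trans (mul_le_mul_of_nonneg_left ?_ hC)
      have hcong : ((j * p ^ N + z : ℕ) : ℤ_[p]) - (z : ℤ_[p]) = j * (p : ℤ_[p]) ^ N := by
        push_cast; ring
      rw [hcong, norm_mul, norm_pow, PadicInt.norm_p]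
      exact mul_le_of_le_one_left (by positivity) (PadicInt.norm_le_one _)
    have hstep : ‖volkenbornSum p f (N + 1) - volkenbornSum p f N‖ ≤ p * C := by
      rw [volkenbornSum_succ_sub hpK, norm_mul, norm_inv, norm_pow, norm_natCast_prime]
      calc ((p : ℝ)⁻¹ ^ (N + 1))⁻¹ *
            ‖∑ j ∈ range p, ∑ z ∈ range (p ^ N), (f (j * p ^ N + z) - f z)‖
          ≤ ((p : ℝ)⁻¹ ^ (N + 1))⁻¹ * (C * ((p : ℝ)⁻¹) ^ N) :=
            mul_le_mul_of_nonneg_left (norm_sum_le_of_forall_le_of_nonneg (by positivity)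
              fun j _ => norm_sum_le_of_forall_le_of_nonneg (by positivity)
                fun z _ => hterm j z) (by positivity)
        _ = p * C := by rw [inv_pow, inv_pow, inv_inv, pow_succ]; field_simp
    calc ‖volkenbornSum p f (N + 1)‖
        = ‖(volkenbornSum p f (N + 1) - volkenbornSum p f N) + volkenbornSum p f N‖ := by
          rw [sub_add_cancel]
      _ ≤ p * C := (norm_add_le_max _ _).trans (max_le hstep ih)

lemma norm_volkenbornSum_mul_pow_le {ι : ℤ_[p] →+* K} (hι : ∀ z, ‖ι z‖ = ‖z‖)
    {E : ℤ_[p] → K} (hE : ∀ z, ‖E z‖ ≤ 1)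
    (hE_lip : ∀ a b, ‖E a - E b‖ ≤ ‖a - b‖) (k N : ℕ) :
    ‖volkenbornSum p (fun z => E z * ι z ^ (k + 1)) N‖ ≤ p := by
  have hι1 : ∀ z, ‖ι z‖ ≤ 1 := fun z => (hι z).trans_le (PadicInt.norm_le_one z)
  refine (norm_volkenbornSum_le zero_le_one (by simp) (fun a b => ?_) N).trans (mul_one _).le
  have hpow : ‖ι b ^ (k + 1)‖ ≤ 1 :=
    (norm_pow _ _).trans_le (pow_le_one₀ (norm_nonneg _) (hι1 b))
  refine (norm_mul_sub_mul_le_max (hE _) hpow).trans (max_le (by simpa using hE_lip a b) ?_)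
  have h := norm_pow_succ_sub_pow_succ_le (hι1 a) (hι1 b) k
  rw [one_mul]
  rwa [one_pow, mul_one, ← map_sub, hι] at h

end VolkenbornSum

theorem hasSum_of_tendsto_volkenbornSum {K : Type*} [NormedField K] [CompleteSpace K] {p : ℕ}
    {f : ℕ → ℕ → K} {g I : ℕ → K} {G : K} {bound : ℕ → ℝ}
    (hfg : ∀ z, HasSum (fun m => f m z) (g z))
    (hf : ∀ m, Tendsto (volkenbornSum p (f m)) atTop (𝓝 (I m)))
    (hf_le : ∀ m N, ‖volkenbornSum p (f m) N‖ ≤ bound m) (h_bound : Summable bound)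
    (hg : Tendsto (volkenbornSum p g) atTop (𝓝 G)) :
    HasSum I G := by
  have hI : Summable I := h_bound.of_norm_bounded fun m =>
    le_of_tendsto (hf m).norm (Eventually.of_forall (hf_le m))
  have hsum : ∀ N, volkenbornSum p g N = ∑' m, volkenbornSum p (f m) N := fun N =>
    (((hasSum_sum fun z _ => hfg z).mul_left _).tsum_eq).symm
  have hlim := tendsto_tsum_of_dominated_convergence h_bound hf
    (Eventually.of_forall fun N m => hf_le m N)
  rw [← funext hsum] at hlim
  rw [tendsto_nhds_unique hg hlim]
  exact hI.hasSum

lemma hasSum_one_add_mul_sub_of_hasSum_log {K : Type*} [Field K] [CharZero K]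
    [TopologicalSpace K] [IsTopologicalRing K] {y l : K}
    (hl : HasSum (fun n : ℕ => (-1) ^ n * y ^ (n + 1) / ((n : K) + 1)) l) :
    HasSum (fun n : ℕ => (-1) ^ n * y ^ (n + 2) / (((n : K) + 1) * ((n : K) + 2)))
      ((1 + y) * l - y) := by
  have htail : HasSum (fun n : ℕ => (-1) ^ (n + 1) * y ^ (n + 1 + 1) / (((n + 1 : ℕ) : K) + 1))
      (l - y) := by
    have h := (hasSum_nat_add_iff' 1).2 hl
    rwa [sum_range_one, pow_zero, one_mul, zero_add, pow_one, Nat.cast_zero, zero_add,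
      div_one] at h
  rw [show (1 + y) * l - y = y * l + (l - y) by ring]
  refine ((hl.mul_left y).add htail).congr_fun fun n => ?_
  have h1 : (n : K) + 1 ≠ 0 := Nat.cast_add_one_ne_zero n
  have h2 : (n : K) + 2 ≠ 0 := by exact_mod_cast (n + 1).succ_ne_zero
  have h2' : ((n + 1 : ℕ) : K) + 1 ≠ 0 := Nat.cast_add_one_ne_zero _
  field_simp
  push_cast
  ring

lemma zpow_neg_natCast_add_one {K : Type*} [DivisionRing K] (x : K) (m : ℕ) :
    x ^ (-((m : ℤ) + 1)) = (x ^ (m + 1))⁻¹ := by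
  rw [← zpow_natCast, ← zpow_neg, Nat.cast_succ]

def diamondCoeff {K : Type*} [Field K] (x : K) (m : ℕ) : K :=
  (-1 : K) ^ (m + 2) / (((m : K) + 1) * ((m : K) + 2)) * x ^ (-((m : ℤ) + 1))

section DiamondKernel

variable {K : Type*} [NormedField K]

/-- With `y = w / x`, `(x+w) L(x+w) - (x+w) - ((x+w) L x - x) = x ((1+y) L(1+y) - y)`. -/
lemma hasSum_diamondCoeff_mul_pow [CharZero K] {L : K → K}
    (hL_series : ∀ y : K, ‖y‖ < 1 →
      HasSum (fun n : ℕ => (-1) ^ n * y ^ (n + 1) / ((n : K) + 1)) (L (1 + y)))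
    (hL_mul : ∀ y z : K, y ≠ 0 → z ≠ 0 → L (y * z) = L y + L z) {x w : K}
    (hwx : ‖w‖ < ‖x‖) :
    HasSum (fun m => diamondCoeff x m * w ^ (m + 2))
      ((x + w) * L (x + w) - (x + w) - ((x + w) * L x - x)) := by
  have hx : x ≠ 0 := norm_pos_iff.1 ((norm_nonneg w).trans_lt hwx)
  have hy : ‖w / x‖ < 1 := by rwa [norm_div, div_lt_one (norm_pos_iff.2 hx)]
  have hy1 : 1 + w / x ≠ 0 := fun h => by
    rw [eq_neg_of_add_eq_zero_right h, norm_neg, norm_one] at hy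
    exact lt_irrefl 1 hy
  have hxy : x + w = x * (1 + w / x) := by field_simp
  rw [hxy, hL_mul x _ hx hy1,
    show x * (1 + w / x) * (L x + L (1 + w / x)) - x * (1 + w / x) -
        (x * (1 + w / x) * L x - x) = x * ((1 + w / x) * L (1 + w / x) - w / x) by
      field_simp; ring]
  refine ((hasSum_one_add_mul_sub_of_hasSum_log (hL_series _ hy)).mul_left x).congr_fun
    fun m => ?_
  have h1 : (m : K) + 1 ≠ 0 := Nat.cast_add_one_ne_zero m
  have h2 : (m : K) + 2 ≠ 0 := by exact_mod_cast (m + 1).succ_ne_zero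
  rw [diamondCoeff, zpow_neg_natCast_add_one, div_pow]
  field_simp
  ring

lemma norm_diamondCoeff_le (p : ℕ) [Fact p.Prime] [NormedAlgebra ℚ_[p] K] (x : K) (m : ℕ) :
    ‖diamondCoeff x m‖ ≤ ((m + 1) * (m + 2) : ℝ) * ‖x‖⁻¹ ^ (m + 1) := by
  have hcast :
      ((m : K) + 1) * ((m : K) + 2) = algebraMap ℚ_[p] K (((m + 1) * (m + 2) : ℕ)) := by
    rw [map_natCast]; push_cast; ring
  rw [diamondCoeff, zpow_neg_natCast_add_one, norm_mul, norm_div, norm_pow, norm_neg, norm_one,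
    one_pow, hcast, norm_algebraMap', norm_inv, norm_pow, inv_pow, one_div]
  refine mul_le_mul_of_nonneg_right ?_ (by positivity)
  exact_mod_cast Padic.inv_norm_natCast_le (Nat.mul_ne_zero m.succ_ne_zero (m + 1).succ_ne_zero)

end DiamondKernel

lemma summable_mul_mul_pow_succ {t : ℝ} (ht0 : 0 ≤ t) (ht1 : t < 1) :
    Summable fun m : ℕ => ((m + 1) * (m + 2) : ℝ) * t ^ (m + 1) := by
  have ht : ‖t‖ < 1 := by rwa [Real.norm_of_nonneg ht0]
  have h := (summable_pow_mul_geometric_of_norm_lt_one 2 ht).add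
    (summable_pow_mul_geometric_of_norm_lt_one 1 ht)
  refine ((summable_nat_add_iff 1).2 h).congr fun m => ?_
  push_cast
  ring

open Filter in
theorem q_diamond_log_gamma_expansion_general
    (p : ℕ) [Fact p.Prime]
    (K : Type*) [NormedField K] [IsUltrametricDist K] [CharZero K]
    [NormedAlgebra ℚ_[p] K] [CompleteSpace K]
    (ι : ℤ_[p] →+* K) (hι : ∀ z : ℤ_[p], ‖ι z‖ = ‖z‖)
    (L : K → K)
    (hL_series : ∀ y : K, ‖y‖ < 1 →
      HasSum (fun n : ℕ => (-1) ^ n * y ^ (n + 1) / ((n : K) + 1)) (L (1 + y)))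
    (hL_mul : ∀ y z : K, y ≠ 0 → z ≠ 0 → L (y * z) = L y + L z)
    (h : ℤ)
    (ℓ : K) (hℓ : ‖ℓ‖ < (p : ℝ) ^ (-(1 : ℝ) / ((p : ℝ) - 1)))
    (B : ℕ → K)
    (hB : ∀ n : ℕ, Tendsto
      (fun N : ℕ => (((p : K) ^ N)⁻¹) *
        ∑ z ∈ Finset.range (p ^ N),
          NormedSpace.exp (ι (z : ℤ_[p]) * ((h : K) * ℓ)) * (ι (z : ℤ_[p])) ^ n)
      atTop (nhds (B n)))
    (x : K) (hx : 1 < ‖x‖)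
    (G : K)
    (hG : Tendsto
      (fun N : ℕ => (((p : K) ^ N)⁻¹) *
        ∑ z ∈ Finset.range (p ^ N),
          ((x + ι (z : ℤ_[p])) * L (x + ι (z : ℤ_[p])) - (x + ι (z : ℤ_[p]))) *
            NormedSpace.exp (ι (z : ℤ_[p]) * ((h : K) * ℓ)))
      atTop (nhds G)) :
    ∃ S : K,
      HasSum (fun m : ℕ =>
        (-1 : K) ^ (m + 2) / (((m : K) + 1) * ((m : K) + 2)) * B (m + 2) *
          x ^ (-((m : ℤ) + 1))) S ∧
      G = (x * B 0 + B 1) * L x - x * B 0 + S := by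
  have hhℓ : ‖(h : K) * ℓ‖ < padicExpRadius p := by
    rw [norm_mul]
    exact (mul_le_of_le_one_left (norm_nonneg ℓ) (norm_intCast_le_one K h)).trans_lt hℓ
  set E : ℤ_[p] → K := fun z => NormedSpace.exp (ι z * ((h : K) * ℓ))
  replace hB : ∀ n, Tendsto (volkenbornSum p fun z => E z * ι z ^ n) atTop (𝓝 (B n)) := hB
  replace hG : Tendsto (volkenbornSum p fun z => ((x + ι z) * L (x + ι z) - (x + ι z)) * E z)
      atTop (𝓝 G) := hG
  have hkernel (z : ℕ) : HasSum (fun m => diamondCoeff x m * (E z * ι z ^ (m + 2)))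
      (((x + ι z) * L (x + ι z) - (x + ι z)) * E z - ((x + ι z) * L x - x) * E z) := by
    have hzx : ‖ι z‖ < ‖x‖ := ((hι z).trans_le (PadicInt.norm_le_one _)).trans_lt hx
    rw [← sub_mul]
    exact ((hasSum_diamondCoeff_mul_pow hL_series hL_mul hzx).mul_right (E z)).congr_fun
      fun m => by ring
  have hterm (m : ℕ) :
      Tendsto (volkenbornSum p fun z => diamondCoeff x m * (E z * ι z ^ (m + 2))) atTop
        (𝓝 (diamondCoeff x m * B (m + 2))) :=
    ((hB (m + 2)).const_mul _).congr fun N => (volkenbornSum_const_mul p _ _ N).symm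
  have hbound (m N : ℕ) :
      ‖volkenbornSum p (fun z => diamondCoeff x m * (E z * ι z ^ (m + 2))) N‖ ≤
        p * (((m + 1) * (m + 2) : ℝ) * ‖x‖⁻¹ ^ (m + 1)) := by
    have hE (z : ℤ_[p]) : ‖E z‖ ≤ 1 :=
      norm_exp_le_one (norm_ringHom_mul_lt_padicExpRadius hι hhℓ z)
    rw [volkenbornSum_const_mul, norm_mul, mul_comm]
    exact mul_le_mul (norm_volkenbornSum_mul_pow_le hι hE
      (norm_exp_ringHom_mul_sub_exp_le hι hhℓ) (m + 1) N) (norm_diamondCoeff_le p x m)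
      (norm_nonneg _) (Nat.cast_nonneg p)
  have haffine : Tendsto (volkenbornSum p fun z => ((x + ι z) * L x - x) * E z) atTop
      (𝓝 ((x * L x - x) * B 0 + L x * B 1)) := by
    refine (((hB 0).const_mul _).add ((hB 1).const_mul _)).congr fun N => ?_
    rw [← volkenbornSum_const_mul, ← volkenbornSum_const_mul, ← volkenbornSum_add]
    congr 1
    funext z
    ring
  have hS := hasSum_of_tendsto_volkenbornSum hkernel hterm hbound
    ((summable_mul_mul_pow_succ (by positivity) (inv_lt_one_of_one_lt₀ hx)).mul_left _)
    ((hG.sub haffine).congr fun N => (volkenbornSum_sub p _ _ N).symm)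
  refine ⟨_, hS.congr_fun fun m => ?_, by ring⟩
  rw [diamondCoeff]
  ring

open Filter in
/-- the `q`-extension of Diamond's `p`-adic log gamma function,
`G_{p,q}^{(h)}(x) = ∫_{ℤ_p} ((x+z)log_p(x+z) − (x+z)) q^{hz} dμ₀(z)` for `|x|_p > 1`,
admits the expansion
`G_{p,q}^{(h)}(x) = (x B₀ + B₁) log_p x − x B₀ + Σ_{n≥1} ((−1)^{n+1}/(n(n+1))) B_{n+1} x^{−n}`
(the series being indexed below by `n = m+1`). Here `K` is a complete nonarchimedean
normed field over `ℚ_p` standing in for `ℂ_p` (with isometric embedding `ι : ℤ_p →+* K`),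
`L = log_p` is the Iwasawa logarithm, `q^{hz} = exp(z·h·log_p q)`, the Volkenborn
integrals are limits of Riemann sums, and `B n = B_{n,q}^{(h)} = ∫_{ℤ_p} q^{hz} zⁿ dμ₀(z)`. -/
theorem q_diamond_log_gamma_expansion
    (p : ℕ) [Fact p.Prime]
    (K : Type*) [NormedField K] [IsUltrametricDist K] [CharZero K]
    [NormedAlgebra ℚ_[p] K] [CompleteSpace K]
    (ι : ℤ_[p] →+* K) (hι : ∀ z : ℤ_[p], ‖ι z‖ = ‖z‖)
    (L : K → K)
    (hL_series : ∀ y : K, ‖y‖ < 1 →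
      HasSum (fun n : ℕ => (-1) ^ n * y ^ (n + 1) / ((n : K) + 1)) (L (1 + y)))
    (hL_mul : ∀ y z : K, y ≠ 0 → z ≠ 0 → L (y * z) = L y + L z)
    (hL_p : L (p : K) = 0)
    (h : ℤ) (q : K) (hq : ‖1 - q‖ < (p : ℝ) ^ (-(1 : ℝ) / ((p : ℝ) - 1)))
    (ℓ : K) (hℓ : ‖ℓ‖ < (p : ℝ) ^ (-(1 : ℝ) / ((p : ℝ) - 1)))
    (hexpℓ : NormedSpace.exp ℓ = q)
    (B : ℕ → K)
    (hB : ∀ n : ℕ, Tendsto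
      (fun N : ℕ => (((p : K) ^ N)⁻¹) *
        ∑ z ∈ Finset.range (p ^ N),
          NormedSpace.exp (ι (z : ℤ_[p]) * ((h : K) * ℓ)) * (ι (z : ℤ_[p])) ^ n)
      atTop (nhds (B n)))
    (x : K) (hx : 1 < ‖x‖)
    (G : K)
    (hG : Tendsto
      (fun N : ℕ => (((p : K) ^ N)⁻¹) *
        ∑ z ∈ Finset.range (p ^ N),
          ((x + ι (z : ℤ_[p])) * L (x + ι (z : ℤ_[p])) - (x + ι (z : ℤ_[p]))) *
            NormedSpace.exp (ι (z : ℤ_[p]) * ((h : K) * ℓ)))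
      atTop (nhds G)) :
    ∃ S : K,
      HasSum (fun m : ℕ =>
        (-1 : K) ^ (m + 2) / (((m : K) + 1) * ((m : K) + 2)) * B (m + 2) *
          x ^ (-((m : ℤ) + 1))) S ∧
      G = (x * B 0 + B 1) * L x - x * B 0 + S :=
  q_diamond_log_gamma_expansion_general p K ι hι L hL_series hL_mul h ℓ hℓ B hB x hx G hG
end
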